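/- Let F(r) = (1/8)(1 - r^2)^2, F̃(r) = min{F(r), M + r^2} with M = max_{z ∈ [-1,1]} F(z), and W(φ) = ∫_{-1}^{φ} √(2 F̃(r)) dr. Then for all φ_1, φ_2 ∈ [-1, 1] one has the quadratic lower bound (φ_1 - φ_2)^2 ≤ 8 |W(φ_1) - W(φ_2)|. -/

import Mathlib

/-! On `[-1, 1]` we have `F ≤ 1/8 = M`, so the truncation is inactive, `√(2 F̃(r)) = (1 - r²)/2`
and `W` is the cubic `φ/2 - φ³/6 + 1/3`. For `-1 ≤ a ≤ b ≤ 1` the bound then reduces to the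
polynomial identity
`8 (W b - W a) - (b - a)² = (b - a) ((b - a) (9 - 4 (b - a)) + 12 (1 + a) (1 - b)) / 3`,
whose right-hand side is visibly nonnegative; equality holds at `a = -1`, `b = 1`. -/

open intervalIntegral Set

lemma isGreatest_doubleWell_image_Icc :
    IsGreatest ((fun r : ℝ => 1/8 * (1 - r^2)^2) '' Icc (-1) 1) (1/8) := by
  refine ⟨⟨0, by norm_num, by norm_num⟩, ?_⟩
  rintro _ ⟨r, ⟨hr₁, hr₂⟩, rfl⟩
  have hr : r^2 ≤ 1 := by nlinarith
  have : (1 - r^2)^2 ≤ 1 := by nlinarith [sq_nonneg r]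
  linarith

lemma sqrt_two_mul_min_doubleWell {r : ℝ} (hr : r ∈ Icc (-1) 1) :
    √(2 * min (1/8 * (1 - r^2)^2) (1/8 + r^2)) = (1 - r^2) / 2 := by
  have hr₂ : r^2 ≤ 1 := by nlinarith [hr.1, hr.2]
  have hmin : 1/8 * (1 - r^2)^2 ≤ 1/8 + r^2 := by nlinarith [sq_nonneg r]
  rw [min_eq_left hmin, show 2 * (1/8 * (1 - r^2)^2) = ((1 - r^2) / 2)^2 by ring,
    Real.sqrt_sq (by linarith)]

lemma integral_one_sub_sq_div_two (a b : ℝ) :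
    ∫ r in a..b, (1 - r^2) / 2 = (b/2 - b^3/6) - (a/2 - a^3/6) := by
  rw [integral_div, integral_sub intervalIntegrable_const (intervalIntegrable_pow 2),
    integral_const, integral_pow]
  simp only [smul_eq_mul]
  ring

lemma sq_sub_le_eight_mul_sub_cubic {a b : ℝ} (ha : -1 ≤ a) (hab : a ≤ b) (hb : b ≤ 1) :
    (b - a)^2 ≤ 8 * ((b/2 - b^3/6) - (a/2 - a^3/6)) := by
  have key : 8 * ((b/2 - b^3/6) - (a/2 - a^3/6)) - (b - a)^2
      = (b - a) * ((b - a) * (9 - 4 * (b - a)) + 12 * ((1 + a) * (1 - b))) / 3 := by ring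
  have hpos : 0 ≤ (b - a) * ((b - a) * (9 - 4 * (b - a)) + 12 * ((1 + a) * (1 - b))) := by
    have : 0 ≤ 9 - 4 * (b - a) := by linarith
    have : 0 ≤ 1 + a := by linarith
    have : 0 ≤ 1 - b := by linarith
    have : 0 ≤ b - a := by linarith
    positivity
  linarith

/-- Quadratic lower bound for `W(φ) = ∫_{-1}^{φ} √(2 F̃(r)) dr` on `[-1,1]`:
`(φ₁ - φ₂)^2 ≤ 8 |W(φ₁) - W(φ₂)|`. -/
theorem stmt_6 (F Ftilde W : ℝ → ℝ) (M : ℝ)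
    (hF : ∀ r, F r = (1/8) * (1 - r^2)^2)
    (hM : IsGreatest (F '' Set.Icc (-1:ℝ) 1) M)
    (hFt : ∀ r, Ftilde r = min (F r) (M + r^2))
    (hW : ∀ φ : ℝ, W φ = ∫ r in (-1:ℝ)..φ, Real.sqrt (2 * Ftilde r)) :
    ∀ φ₁ ∈ Set.Icc (-1:ℝ) 1, ∀ φ₂ ∈ Set.Icc (-1:ℝ) 1,
      (φ₁ - φ₂)^2 ≤ 8 * |W φ₁ - W φ₂| := by
  obtain rfl : F = fun r => 1/8 * (1 - r^2)^2 := funext hF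
  obtain rfl : M = 1/8 := hM.unique isGreatest_doubleWell_image_Icc
  have hW_eq : ∀ φ ∈ Icc (-1:ℝ) 1, W φ = φ/2 - φ^3/6 + 1/3 := by
    intro φ hφ
    have hsub : uIcc (-1) φ ⊆ Icc (-1:ℝ) 1 := by
      rw [uIcc_of_le hφ.1]
      exact Icc_subset_Icc le_rfl hφ.2
    have hintegrand : EqOn (fun r => √(2 * Ftilde r)) (fun r => (1 - r^2) / 2) (uIcc (-1) φ) :=
      fun r hr => by simpa only [hFt] using sqrt_two_mul_min_doubleWell (hsub hr)
    rw [hW, integral_congr hintegrand, integral_one_sub_sq_div_two]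
    ring
  have hle : ∀ a ∈ Icc (-1:ℝ) 1, ∀ b ∈ Icc (-1:ℝ) 1, a ≤ b → (b - a)^2 ≤ 8 * |W b - W a| := by
    intro a ha b hb hab
    rw [hW_eq a ha, hW_eq b hb]
    have hcubic := sq_sub_le_eight_mul_sub_cubic ha.1 hab hb.2
    have habs := le_abs_self ((b/2 - b^3/6 + 1/3) - (a/2 - a^3/6 + 1/3))
    linarith
  intro φ₁ h₁ φ₂ h₂
  rcases le_total φ₂ φ₁ with h | h
  · exact hle φ₂ h₂ φ₁ h₁ h
  · rw [abs_sub_comm, ← neg_sub, neg_sq]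
    exact hle φ₁ h₁ φ₂ h₂ h
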